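/- arXiv:2504.07719 — 3 statements merged into one kernel-verified Lean document; each statement's English description precedes it below -/
import Mathlib

section
/- Let a ∈ (1/2,1), let k be a positive natural number, and let z₁,…,z_k ∈ (0,1) satisfy ∑_{i=1}^k z_i ≤ k·a and ∑_{i=1}^k |z_i − a| > c·k for some c > 0. Then ∑_{i=1}^k sqrt(z_i) ≤ k·sqrt(a) − c²·k/8. -/
open Real Finset

lemma ptwise_sqrt (a z : ℝ) (ha0 : 0 < a) (ha1 : a < 1) (hz0 : 0 < z) (hz1 : z < 1) :
    Real.sqrt z ≤ Real.sqrt a + (z - a) / (2 * Real.sqrt a) - (z - a) ^ 2 / 8 := by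
  have ht : 0 < Real.sqrt a := Real.sqrt_pos.mpr ha0
  have hs : 0 ≤ Real.sqrt z := Real.sqrt_nonneg z
  have ht1 : Real.sqrt a < 1 := by
    rw [show (1:ℝ) = Real.sqrt 1 by simp]
    exact Real.sqrt_lt_sqrt ha0.le ha1
  have hs1 : Real.sqrt z < 1 := by
    rw [show (1:ℝ) = Real.sqrt 1 by simp]
    exact Real.sqrt_lt_sqrt hz0.le hz1
  have hz2 : Real.sqrt z ^ 2 = z := Real.sq_sqrt hz0.le
  have ha2 : Real.sqrt a ^ 2 = a := Real.sq_sqrt ha0.le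
  have h4 : 0 ≤ 4 - Real.sqrt a * (Real.sqrt z + Real.sqrt a) ^ 2 := by nlinarith
  set s := Real.sqrt z with hsdef
  set t := Real.sqrt a with htdef
  rw [← hz2, ← ha2, ← sub_nonneg]
  have key : t + (s ^ 2 - t ^ 2) / (2 * t) - (s ^ 2 - t ^ 2) ^ 2 / 8 - s
      = (s - t) ^ 2 * (4 - t * (s + t) ^ 2) / (8 * t) := by
    field_simp
    ring
  rw [key]
  exact div_nonneg (mul_nonneg (sq_nonneg _) h4) (by positivity)

theorem utility_loss_of_variation (a : ℝ) (ha : a ∈ Set.Ioo (1/2 : ℝ) 1)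
    (k : ℕ) (hk : 0 < k) (z : ℕ → ℝ)
    (hz : ∀ i ∈ Finset.Icc 1 k, z i ∈ Set.Ioo (0 : ℝ) 1)
    (hsum : ∑ i ∈ Finset.Icc 1 k, z i ≤ (k : ℝ) * a)
    (c : ℝ) (hc : 0 < c)
    (hvar : ∑ i ∈ Finset.Icc 1 k, |z i - a| > c * k) :
    ∑ i ∈ Finset.Icc 1 k, Real.sqrt (z i) ≤ (k : ℝ) * Real.sqrt a - c ^ 2 * k / 8 := by
  have ha0 : 0 < a := lt_trans (by norm_num) ha.1
  have ht : 0 < Real.sqrt a := Real.sqrt_pos.mpr ha0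
  have hcard : (Finset.Icc 1 k).card = k := by simp
  -- pointwise bound
  have h1 : ∑ i ∈ Finset.Icc 1 k, Real.sqrt (z i)
      ≤ ∑ i ∈ Finset.Icc 1 k, (Real.sqrt a + (z i - a) / (2 * Real.sqrt a) - (z i - a) ^ 2 / 8) :=
    Finset.sum_le_sum fun i hi => ptwise_sqrt a (z i) ha0 ha.2 (hz i hi).1 (hz i hi).2
  have h2 : ∑ i ∈ Finset.Icc 1 k, (Real.sqrt a + (z i - a) / (2 * Real.sqrt a) - (z i - a) ^ 2 / 8)
      = (k : ℝ) * Real.sqrt a + (∑ i ∈ Finset.Icc 1 k, z i - k * a) / (2 * Real.sqrt a)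
        - (∑ i ∈ Finset.Icc 1 k, (z i - a) ^ 2) / 8 := by
    rw [Finset.sum_sub_distrib, Finset.sum_add_distrib, Finset.sum_const, hcard,
      ← Finset.sum_div, ← Finset.sum_div, Finset.sum_sub_distrib, Finset.sum_const, hcard]
    ring
  -- Cauchy-Schwarz
  have h3 : (c * k) ^ 2 < (∑ i ∈ Finset.Icc 1 k, |z i - a|) ^ 2 := by
    have := hvar
    have hck : 0 < c * k := by positivity
    nlinarith
  have h4 : (∑ i ∈ Finset.Icc 1 k, |z i - a|) ^ 2
      ≤ (k : ℝ) * ∑ i ∈ Finset.Icc 1 k, (z i - a) ^ 2 := by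
    have := sq_sum_le_card_mul_sum_sq (s := Finset.Icc 1 k) (f := fun i => |z i - a|)
    simpa [hcard, sq_abs] using this
  have h5 : c ^ 2 * k ≤ ∑ i ∈ Finset.Icc 1 k, (z i - a) ^ 2 := by
    have hkpos : (0:ℝ) < k := by positivity
    nlinarith
  have h6 : (∑ i ∈ Finset.Icc 1 k, z i - k * a) / (2 * Real.sqrt a) ≤ 0 := by
    apply div_nonpos_of_nonpos_of_nonneg
    · linarith
    · positivity
  calc ∑ i ∈ Finset.Icc 1 k, Real.sqrt (z i)
      ≤ (k : ℝ) * Real.sqrt a + (∑ i ∈ Finset.Icc 1 k, z i - k * a) / (2 * Real.sqrt a)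
        - (∑ i ∈ Finset.Icc 1 k, (z i - a) ^ 2) / 8 := h1.trans_eq h2
    _ ≤ (k : ℝ) * Real.sqrt a - c ^ 2 * k / 8 := by linarith
end

section
/- Suppose β = 1 and R_t = 1 for all t, and incomes y₁,…,y_T ≥ 0. Given any feasible consumption sequence c₁,…,c_T (satisfying 0 ≤ c_t and ∑_{t=1}^r c_t ≤ a₁ + ∑_{t=1}^{r-1} y_t for all r), the k-delayed sequence z_t defined by z_t = 0 for t ≤ k and z_t = c_{t−k} for t > k is also feasible and achieves total utility ∑_{t=1}^{T−k} sqrt(c_t). -/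
open Real Finset

lemma delayed_sum_shift (k r : ℕ) (c : ℕ → ℝ) (g : ℝ → ℝ) (hg : g 0 = 0)
    (z : ℕ → ℝ) (hz : ∀ t, z t = if t ≤ k then 0 else c (t - k)) :
    ∑ t ∈ Finset.Icc 1 r, g (z t) = ∑ t ∈ Finset.Icc 1 (r - k), g (c t) := by
  rcases le_or_gt r k with h | h
  · rw [Nat.sub_eq_zero_of_le h]
    rw [show Finset.Icc 1 0 = (∅ : Finset ℕ) by simp, Finset.sum_empty]
    apply Finset.sum_eq_zero
    intro t ht
    simp only [Finset.mem_Icc] at ht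
    rw [hz, if_pos (le_trans ht.2 h), hg]
  · have hIcc : ∀ m : ℕ, Finset.Icc 1 m = Finset.Ioc 0 m := by
      intro m; exact Finset.Icc_add_one_left_eq_Ioc 0 m
    rw [hIcc, hIcc]
    have hsplit := Finset.sum_Ioc_consecutive (f := fun t => g (z t))
      (Nat.zero_le k) (le_of_lt h)
    rw [← hsplit]
    have h1 : ∑ t ∈ Finset.Ioc 0 k, g (z t) = 0 := by
      apply Finset.sum_eq_zero
      intro t ht
      simp only [Finset.mem_Ioc] at ht
      rw [hz, if_pos ht.2, hg]
    rw [h1, zero_add]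
    have hmap : (Finset.Ioc 0 (r - k)).map (addRightEmbedding k) = Finset.Ioc k r := by
      rw [Finset.map_add_right_Ioc, zero_add, Nat.sub_add_cancel (le_of_lt h)]
    rw [← hmap, Finset.sum_map]
    apply Finset.sum_congr rfl
    intro t ht
    simp only [Finset.mem_Ioc] at ht
    rw [hz, addRightEmbedding_apply, if_neg (by omega), Nat.add_sub_cancel]

theorem delayed_consumption_feasible (T k : ℕ) (hk : k ≤ T)
    (a1 : ℝ) (ha1 : 0 ≤ a1) (y : ℕ → ℝ) (hy : ∀ t, 0 ≤ y t)
    (c : ℕ → ℝ) (hc0 : ∀ t, 0 ≤ c t)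
    (hfeas : ∀ r ∈ Finset.Icc 1 T,
      ∑ t ∈ Finset.Icc 1 r, c t ≤ a1 + ∑ t ∈ Finset.Icc 1 (r - 1), y t)
    (z : ℕ → ℝ) (hz : ∀ t, z t = if t ≤ k then 0 else c (t - k)) :
    ((∀ t, 0 ≤ z t) ∧
      (∀ r ∈ Finset.Icc 1 T,
        ∑ t ∈ Finset.Icc 1 r, z t ≤ a1 + ∑ t ∈ Finset.Icc 1 (r - 1), y t))
    ∧ ∑ t ∈ Finset.Icc 1 T, Real.sqrt (z t)
        = ∑ t ∈ Finset.Icc 1 (T - k), Real.sqrt (c t) := by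
  refine ⟨⟨?_, ?_⟩, ?_⟩
  · intro t
    rw [hz]
    split
    · exact le_refl 0
    · exact hc0 _
  · intro r hr
    simp only [Finset.mem_Icc] at hr
    have hsum : ∑ t ∈ Finset.Icc 1 r, z t = ∑ t ∈ Finset.Icc 1 (r - k), c t :=
      delayed_sum_shift k r c id rfl z hz
    rw [hsum]
    rcases le_or_gt r k with h | h
    · rw [Nat.sub_eq_zero_of_le h]
      have : Finset.Icc 1 0 = (∅ : Finset ℕ) := by simp
      rw [this, Finset.sum_empty]
      have : (0:ℝ) ≤ ∑ t ∈ Finset.Icc 1 (r-1), y t :=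
        Finset.sum_nonneg fun t _ => hy t
      linarith
    · have hmem : r - k ∈ Finset.Icc 1 T := by
        simp only [Finset.mem_Icc]; omega
      have h1 := hfeas (r - k) hmem
      have h2 : ∑ t ∈ Finset.Icc 1 (r - k - 1), y t ≤ ∑ t ∈ Finset.Icc 1 (r - 1), y t := by
        apply Finset.sum_le_sum_of_subset_of_nonneg
        · exact Finset.Icc_subset_Icc_right (by omega)
        · intro t _ _; exact hy t
      linarith
  · exact delayed_sum_shift k T c Real.sqrt Real.sqrt_zero z hz
end

section
/- Let y₁ ≤ y₂ ≤ … ≤ y_T be a nondecreasing nonnegative income sequence with zero initial assets, dynamics x_{t+1} = x_t − c_t + y_t (x₁ = 0), constraints 0 ≤ c_t ≤ x_t + y_t, and terminal condition x_{T+1} = 0. Then the consumption sequence c_t = y_t is feasible and maximizes ∑_{t=1}^T sqrt(c_t) over all feasible sequences. -/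
open Real Finset

/-- Abel-type summation bound. -/
lemma abel_bound (d w : ℕ → ℝ) :
    ∀ T : ℕ, (∀ r ∈ Finset.Icc 1 T, ∑ t ∈ Finset.Icc 1 r, d t ≤ 0) →
    (∀ t, 1 ≤ t → t + 1 ≤ T → (w (t+1) ≤ w t ∨ ∑ s ∈ Finset.Icc 1 t, d s = 0)) →
    ∑ t ∈ Finset.Icc 1 T, d t * w t ≤ (∑ t ∈ Finset.Icc 1 T, d t) * w T := by
  intro T
  induction T with
  | zero => simp
  | succ T ih =>
    intro hS hw
    rw [Finset.sum_Icc_succ_top (by omega), Finset.sum_Icc_succ_top (by omega)]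
    have hIH := ih (fun r hr => hS r (Finset.mem_Icc.mpr ⟨(Finset.mem_Icc.mp hr).1, by
        have := (Finset.mem_Icc.mp hr).2; omega⟩))
      (fun t ht1 ht2 => hw t ht1 (by omega))
    have hstep : (∑ t ∈ Finset.Icc 1 T, d t) * w T ≤
        (∑ t ∈ Finset.Icc 1 T, d t) * w (T+1) := by
      rcases Nat.eq_zero_or_pos T with h0 | hpos
      · subst h0; simp
      · rcases hw T hpos le_rfl with hle | heq
        · have hS' : ∑ t ∈ Finset.Icc 1 T, d t ≤ 0 :=
            hS T (Finset.mem_Icc.mpr ⟨hpos, by omega⟩)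
          exact mul_le_mul_of_nonpos_left hle hS'
        · rw [heq]; simp
    calc ∑ t ∈ Finset.Icc 1 T, d t * w t + d (T+1) * w (T+1)
        ≤ (∑ t ∈ Finset.Icc 1 T, d t) * w (T+1) + d (T+1) * w (T+1) := by
          linarith
      _ = (∑ t ∈ Finset.Icc 1 T, d t + d (T+1)) * w (T+1) := by ring

/-- Supergradient inequality for sqrt (with Lean's division-by-zero convention). -/
lemma sqrt_supergrad {y c : ℝ} (hy : 0 ≤ y) (hc : 0 ≤ c) (h0 : y = 0 → c = 0) :
    Real.sqrt c ≤ Real.sqrt y + (c - y) * (1 / (2 * Real.sqrt y)) := by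
  rcases eq_or_lt_of_le hy with h | h
  · have : c = 0 := h0 h.symm
    simp [this, ← h]
  · set a := Real.sqrt y with ha
    set b := Real.sqrt c with hb
    have ha2 : a ^ 2 = y := Real.sq_sqrt hy
    have hb2 : b ^ 2 = c := Real.sq_sqrt hc
    have hapos : 0 < a := Real.sqrt_pos.mpr h
    have key : b - a ≤ (c - y) * (1 / (2 * a)) := by
      rw [mul_one_div, le_div_iff₀ (by positivity)]
      nlinarith [sq_nonneg (a - b)]
    linarith

theorem hand_to_mouth_optimal (T : ℕ) (y : ℕ → ℝ)
    (hy0 : ∀ t ∈ Finset.Icc 1 T, 0 ≤ y t)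
    (hymono : ∀ s ∈ Finset.Icc 1 T, ∀ t ∈ Finset.Icc 1 T, s ≤ t → y s ≤ y t) :
    ((∀ r ∈ Finset.Icc 1 T,
        ∑ t ∈ Finset.Icc 1 r, y t ≤ ∑ t ∈ Finset.Icc 1 r, y t)
      ∧ ∑ t ∈ Finset.Icc 1 T, y t = ∑ t ∈ Finset.Icc 1 T, y t)
    ∧ (∀ c : ℕ → ℝ, (∀ t ∈ Finset.Icc 1 T, 0 ≤ c t) →
        (∀ r ∈ Finset.Icc 1 T,
          ∑ t ∈ Finset.Icc 1 r, c t ≤ ∑ t ∈ Finset.Icc 1 r, y t) →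
        ∑ t ∈ Finset.Icc 1 T, c t = ∑ t ∈ Finset.Icc 1 T, y t →
        ∑ t ∈ Finset.Icc 1 T, Real.sqrt (c t) ≤ ∑ t ∈ Finset.Icc 1 T, Real.sqrt (y t)) := by
  refine ⟨⟨fun r _ => le_rfl, rfl⟩, fun c hc0 hc1 hc2 => ?_⟩
  set w : ℕ → ℝ := fun t => 1 / (2 * Real.sqrt (y t)) with hw
  set d : ℕ → ℝ := fun t => c t - y t with hd
  -- if y t = 0 for t in range, then c t = 0
  have hczero : ∀ t ∈ Finset.Icc 1 T, y t = 0 → c t = 0 := by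
    intro t ht hyt
    have ht' := Finset.mem_Icc.mp ht
    have hysum : ∑ s ∈ Finset.Icc 1 t, y s = 0 := by
      apply Finset.sum_eq_zero
      intro s hs
      have hs' := Finset.mem_Icc.mp hs
      have hsT : s ∈ Finset.Icc 1 T := Finset.mem_Icc.mpr ⟨hs'.1, le_trans hs'.2 ht'.2⟩
      have := hymono s hsT t ht hs'.2
      have := hy0 s hsT
      linarith [hyt ▸ this]
    have hcle : ∑ s ∈ Finset.Icc 1 t, c s ≤ 0 := by
      have := hc1 t ht
      rw [hysum] at this; exact this
    have hsingle : c t ≤ ∑ s ∈ Finset.Icc 1 t, c s := by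
      apply Finset.single_le_sum (f := c)
      · intro s hs
        have hs' := Finset.mem_Icc.mp hs
        exact hc0 s (Finset.mem_Icc.mpr ⟨hs'.1, le_trans hs'.2 ht'.2⟩)
      · exact Finset.mem_Icc.mpr ⟨ht'.1, le_rfl⟩
    have := hc0 t ht
    linarith
  have habel : ∑ t ∈ Finset.Icc 1 T, d t * w t ≤ 0 := by
    have hS : ∀ r ∈ Finset.Icc 1 T, ∑ t ∈ Finset.Icc 1 r, d t ≤ 0 := by
      intro r hr
      have := hc1 r hr
      simp only [hd, Finset.sum_sub_distrib]
      linarith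
    have hwmono : ∀ t, 1 ≤ t → t + 1 ≤ T →
        (w (t+1) ≤ w t ∨ ∑ s ∈ Finset.Icc 1 t, d s = 0) := by
      intro t ht1 ht2
      have htT : t ∈ Finset.Icc 1 T := Finset.mem_Icc.mpr ⟨ht1, by omega⟩
      have ht1T : t + 1 ∈ Finset.Icc 1 T := Finset.mem_Icc.mpr ⟨by omega, ht2⟩
      rcases eq_or_lt_of_le (hy0 t htT) with h | h
      · right
        apply Finset.sum_eq_zero
        intro s hs
        have hs' := Finset.mem_Icc.mp hs
        have hsT : s ∈ Finset.Icc 1 T := Finset.mem_Icc.mpr ⟨hs'.1, by omega⟩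
        have hys : y s = 0 := by
          have h1 := hymono s hsT t htT hs'.2
          have h2 := hy0 s hsT
          linarith [h ▸ h1]
        have := hczero s hsT hys
        simp [hd, hys, this]
      · left
        have hy' : y t ≤ y (t+1) := hymono t htT (t+1) ht1T (by omega)
        have h1 : Real.sqrt (y t) ≤ Real.sqrt (y (t+1)) := Real.sqrt_le_sqrt hy'
        have h2 : 0 < Real.sqrt (y t) := Real.sqrt_pos.mpr h
        simp only [hw]
        gcongr
    have := abel_bound d w T hS hwmono
    have hST : ∑ t ∈ Finset.Icc 1 T, d t = 0 := by
      simp only [hd, Finset.sum_sub_distrib]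
      linarith [hc2]
    rw [hST] at this
    simpa using this
  have hpt : ∀ t ∈ Finset.Icc 1 T,
      Real.sqrt (c t) ≤ Real.sqrt (y t) + d t * w t := by
    intro t ht
    exact sqrt_supergrad (hy0 t ht) (hc0 t ht) (hczero t ht)
  calc ∑ t ∈ Finset.Icc 1 T, Real.sqrt (c t)
      ≤ ∑ t ∈ Finset.Icc 1 T, (Real.sqrt (y t) + d t * w t) :=
        Finset.sum_le_sum hpt
    _ = ∑ t ∈ Finset.Icc 1 T, Real.sqrt (y t) + ∑ t ∈ Finset.Icc 1 T, d t * w t := by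
        rw [Finset.sum_add_distrib]
    _ ≤ ∑ t ∈ Finset.Icc 1 T, Real.sqrt (y t) := by linarith
end
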